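/- arXiv:1501.03116 — 4 statements merged into one kernel-verified Lean document; each statement's English description precedes it below -/
import Mathlib

section
/- For d >= 2, every unit sphere S(x) of an Eulerian d-sphere G is an Eulerian (d-1)-sphere; that is, S(x) is a (d-1)-sphere of chromatic number d. -/
universe u

open SimpleGraph

/-- A graph is contractible if it is a one-point graph, or if it has a vertex `x`
such that both the unit sphere `S(x)` and the graph with `x` deleted are contractible. -/
inductive GraphContractible : ∀ {V : Type u}, SimpleGraph V → Prop
  | point {V : Type u} (G : SimpleGraph V) (h1 : Nonempty V) (h2 : Subsingleton V) :
      GraphContractible G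
  | step {V : Type u} (G : SimpleGraph V) (x : V)
      (hS : GraphContractible (G.induce (G.neighborSet x)))
      (hD : GraphContractible (G.induce {y : V | y ≠ x})) :
      GraphContractible G

/-- `IsSphere d G` : `G` is a `d`-sphere.  The empty graph is the `(-1)`-sphere;
for `d ≥ 0`, a `d`-sphere is a nonempty graph all of whose unit spheres are
`(d-1)`-spheres and such that deleting some vertex leaves a contractible graph. -/
inductive IsSphere : ℤ → ∀ {V : Type u}, SimpleGraph V → Prop
  | empty {V : Type u} (G : SimpleGraph V) (h : IsEmpty V) : IsSphere (-1) G
  | step {d : ℤ} (hd : 0 ≤ d) {V : Type u} (G : SimpleGraph V) (hne : Nonempty V)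
      (hS : ∀ x : V, IsSphere (d - 1) (G.induce (G.neighborSet x)))
      (hx : ∃ x : V, GraphContractible (G.induce {y : V | y ≠ x})) :
      IsSphere d G

lemma sphere_not_colorable : ∀ (n : ℕ) {V : Type u} (G : SimpleGraph V),
    IsSphere (n : ℤ) G → ¬ G.Colorable n := by
  intro n
  induction n with
  | zero =>
    intro V G hG hc
    cases hG with
    | step hd G hne hS hx =>
      obtain ⟨C⟩ := hc
      exact (Fin.elim0 (C hne.some))
  | succ m ih =>
    intro V G hG hc
    cases hG with
    | step hd G hne hS hx =>
      obtain ⟨C⟩ := hc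
      obtain ⟨x⟩ := hne
      have hSx := hS x
      have : ((m + 1 : ℕ) : ℤ) - 1 = (m : ℤ) := by push_cast; ring
      rw [this] at hSx
      apply ih _ hSx
      -- color S(x) with colors ≠ C x
      have C' : (G.induce (G.neighborSet x)).Coloring {c : Fin (m + 1) // c ≠ C x} :=
        ⟨fun y => ⟨C y.1, fun h => C.valid y.2 h.symm⟩,
          by
            rintro ⟨a, ha⟩ ⟨b, hb⟩ hab h
            exact C.valid hab (Subtype.ext_iff.mp h)⟩
      have hcard : Fintype.card {c : Fin (m + 1) // c ≠ C x} = m := by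
        simp [Fintype.card_subtype_compl]
      exact hcard ▸ C'.colorable


/-- For `d ≥ 2`, every unit sphere of an Eulerian `d`-sphere is an Eulerian
`(d-1)`-sphere: a `(d-1)`-sphere of chromatic number `d`. -/
theorem unitSphere_of_eulerianSphere {V : Type} [Fintype V]
    (d : ℕ) (hd : 2 ≤ d) (G : SimpleGraph V) (hG : IsSphere (d : ℤ) G)
    (hc : G.chromaticNumber = (d : ℕ∞) + 1) (x : V) :
    IsSphere ((d : ℤ) - 1) (G.induce (G.neighborSet x)) ∧
      (G.induce (G.neighborSet x)).chromaticNumber = (d : ℕ∞) := by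
  have hSx : IsSphere ((d : ℤ) - 1) (G.induce (G.neighborSet x)) := by
    cases hG with
    | step hd' G hne hS hx => exact hS x
  refine ⟨hSx, le_antisymm ?_ ?_⟩
  · -- upper bound: χ(S(x)) ≤ d
    have hcol : G.Colorable (d + 1) := by
      rw [← chromaticNumber_le_iff_colorable, hc]
      push_cast; rfl
    obtain ⟨C⟩ := hcol
    have C' : (G.induce (G.neighborSet x)).Coloring {c : Fin (d + 1) // c ≠ C x} :=
      ⟨fun y => ⟨C y.1, fun h => C.valid y.2 h.symm⟩,
        by
          rintro ⟨a, ha⟩ ⟨b, hb⟩ hab h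
          exact C.valid hab (Subtype.ext_iff.mp h)⟩
    have hcard : Fintype.card {c : Fin (d + 1) // c ≠ C x} = d := by
      simp [Fintype.card_subtype_compl]
    have := C'.colorable
    rw [hcard] at this
    exact this.chromaticNumber_le
  · -- lower bound: χ(S(x)) ≥ d
    have hS' : IsSphere ((d - 1 : ℕ) : ℤ) (G.induce (G.neighborSet x)) := by
      have : ((d - 1 : ℕ) : ℤ) = (d : ℤ) - 1 := by omega
      rw [this]; exact hSx
    have hnc := sphere_not_colorable (d - 1) _ hS'
    rw [← chromaticNumber_le_iff_colorable, not_le] at hnc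
    have := Order.add_one_le_of_lt hnc
    have hdd : ((d - 1 : ℕ) : ℕ∞) + 1 = (d : ℕ∞) := by
      have h1 : (d - 1 + 1 : ℕ) = d := by omega
      calc ((d - 1 : ℕ) : ℕ∞) + 1 = ((d - 1 + 1 : ℕ) : ℕ∞) := by push_cast; ring
        _ = (d : ℕ∞) := by rw [h1]
    rwa [hdd] at this
end

section
/- Let G be a graph in which every unit sphere S(x) is a (d-1)-sphere (a geometric graph of dimension d without boundary). Then for every complete subgraph K of G on k vertices with 1 <= k <= d+1, the dual graph of K in G is a (d-k)-sphere. -/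
universe u

open SimpleGraph

/-- The dual set of a set `A` of vertices in `G`: all vertices adjacent to every vertex
of `A` (the vertex set of the intersection of the unit spheres centered at points of `A`);
the dual of the empty set is everything. -/
def dualSet {V : Type u} (G : SimpleGraph V) (A : Set V) : Set V :=
  {z : V | ∀ y ∈ A, G.Adj y z}

universe v

/-- Restrict an isomorphism to induced subgraphs on corresponding vertex sets. -/
def isoInduce {V : Type u} {W : Type v} {G : SimpleGraph V} {H : SimpleGraph W}
    (e : G ≃g H) (s : Set V) (t : Set W) (hst : ∀ x, x ∈ s ↔ e x ∈ t) :
    G.induce s ≃g H.induce t where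
  toEquiv := e.toEquiv.subtypeEquiv hst
  map_rel_iff' := by intro a b; simpa using e.map_rel_iff

theorem contractible_iso : ∀ {V : Type u} {G : SimpleGraph V}, GraphContractible G →
    ∀ {W : Type v} {H : SimpleGraph W}, (G ≃g H) → GraphContractible H := by
  intro V G h
  induction h with
  | point G h1 h2 =>
      intro W H e
      exact GraphContractible.point H ⟨e h1.some⟩
        ⟨fun a b => e.symm.injective (Subsingleton.elim _ _)⟩
  | step G x hS hD ihS ihD =>
      intro W H e
      refine GraphContractible.step H (e x) (ihS (isoInduce e _ _ fun z => ?_))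
        (ihD (isoInduce e _ _ fun z => ?_))
      · simp [SimpleGraph.mem_neighborSet, e.map_adj_iff]
      · simp

theorem isSphere_iso : ∀ {n : ℤ} {V : Type u} {G : SimpleGraph V}, IsSphere n G →
    ∀ {W : Type v} {H : SimpleGraph W}, (G ≃g H) → IsSphere n H := by
  intro n V G h
  induction h with
  | empty G h =>
      intro W H e
      exact IsSphere.empty H ⟨fun w => h.false (e.symm w)⟩
  | step hd G hne hS hx ih =>
      intro W H e
      refine IsSphere.step hd H ⟨e hne.some⟩ (fun w => ?_) ?_
      · have hmem : ∀ z, z ∈ G.neighborSet (e.symm w) ↔ e z ∈ H.neighborSet w := by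
          intro z
          have hw : e (e.symm w) = w := e.toEquiv.apply_symm_apply w
          constructor
          · intro hz
            have h2 : H.Adj (e (e.symm w)) (e z) := e.map_adj_iff.mpr hz
            rw [hw] at h2
            exact h2
          · intro hz
            have h2 : H.Adj w (e z) := hz
            rw [← hw] at h2
            exact e.map_adj_iff.mp h2
        exact ih (e.symm w) (isoInduce e _ (H.neighborSet w) hmem)
      · obtain ⟨x, hx⟩ := hx
        exact ⟨e x, contractible_iso hx (isoInduce e _ _ fun z => by simp)⟩

theorem dual_aux : ∀ (k : ℕ), ∀ {V : Type} [Fintype V] (d : ℕ) (G : SimpleGraph V),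
    (∀ x : V, IsSphere ((d : ℤ) - 1) (G.induce (G.neighborSet x))) →
    ∀ (K : Finset V), G.IsClique (K : Set V) →
    1 ≤ k → k ≤ d + 1 → K.card = k →
    IsSphere ((d : ℤ) - k) (G.induce (dualSet G (K : Set V))) := by
  intro k
  induction k with
  | zero => intro _ _ _ _ _ _ _ h _; omega
  | succ n ih =>
      intro V _ d G hG K hK _ hk2 hcard
      classical
      rcases Nat.eq_zero_or_pos n with hn0 | hn1
      · -- base case k = 1 : K = {x}, dual = S(x)
        subst hn0
        obtain ⟨x, hx⟩ := Finset.card_eq_one.mp hcard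
        subst hx
        have hset : dualSet G (({x} : Finset V) : Set V) = G.neighborSet x := by
          ext z
          simp [dualSet, SimpleGraph.mem_neighborSet]
        rw [hset]
        simpa using hG x
      · -- inductive step
        have hKne : K.Nonempty := by rw [← Finset.card_pos, hcard]; omega
        obtain ⟨x, hxK⟩ := hKne
        have hd1 : 1 ≤ d := by omega
        set S := G.neighborSet x with hSdef
        set G1 := G.induce S with hG1def
        -- the punctured clique lies in S
        have hsub : ∀ y ∈ K.erase x, y ∈ S := by
          intro y hy
          exact hK hxK (Finset.mem_of_mem_erase hy)
            (Ne.symm (Finset.ne_of_mem_erase hy))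
        -- transfer the punctured clique into the subtype
        let f : {y // y ∈ K.erase x} → ↥S := fun y => ⟨y.1, hsub y.1 y.2⟩
        have hfinj : Function.Injective f := by
          intro a b hab
          have h2 : (f a).1 = (f b).1 := congrArg Subtype.val hab
          exact Subtype.ext h2
        let K'' : Finset ↥S := (K.erase x).attach.map ⟨f, hfinj⟩
        have hmemK'' : ∀ w : ↥S, w ∈ K'' ↔ w.1 ∈ K.erase x := by
          intro w
          constructor
          · intro hw
            obtain ⟨a, _, ha⟩ := Finset.mem_map.mp hw
            rw [← ha]; exact a.2
          · intro hw
            exact Finset.mem_map.mpr ⟨⟨w.1, hw⟩, Finset.mem_attach _ _,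
              Subtype.ext rfl⟩
        have hcard'' : K''.card = n := by
          rw [Finset.card_map, Finset.card_attach, Finset.card_erase_of_mem hxK, hcard]
          omega
        have hclique'' : G1.IsClique (K'' : Set ↥S) := by
          intro a ha b hb hab
          have ha' : a.1 ∈ K := Finset.mem_of_mem_erase ((hmemK'' a).1 ha)
          have hb' : b.1 ∈ K := Finset.mem_of_mem_erase ((hmemK'' b).1 hb)
          have : G.Adj a.1 b.1 := hK ha' hb' (fun h => hab (Subtype.ext h))
          exact this
        -- the unit spheres in G1 are (d-2)-spheres
        haveI : Fintype ↥S := Fintype.ofFinite _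
        have hG1spheres : ∀ z : ↥S,
            IsSphere (((d - 1 : ℕ) : ℤ) - 1) (G1.induce (G1.neighborSet z)) := by
          have h := hG x
          rw [← hSdef, ← hG1def] at h
          generalize he : (d : ℤ) - 1 = m at h
          cases h with
          | empty _ h => omega
          | step hd' _ hne hSp hxc =>
              subst he
              intro z
              have h2 : ((d - 1 : ℕ) : ℤ) - 1 = (d : ℤ) - 1 - 1 := by
                push_cast [hd1]; ring
              rw [h2]
              exact hSp z
        -- apply the induction hypothesis inside S(x)
        have hIH := ih (d - 1) G1 hG1spheres K'' hclique'' hn1 (by omega) hcard''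
        -- build the isomorphism between dual(K'') in G1 and dual(K) in G
        have hdualmem : ∀ z : V, z ∈ dualSet G (K : Set V) ↔
            ∃ hz : z ∈ S, (⟨z, hz⟩ : ↥S) ∈ dualSet G1 (K'' : Set ↥S) := by
          intro z
          constructor
          · intro hz
            have hzS : z ∈ S := hz x (by simpa using hxK)
            refine ⟨hzS, ?_⟩
            intro w hw
            have hw' : w.1 ∈ K.erase x := (hmemK'' w).1 (by simpa using hw)
            have : G.Adj w.1 z := hz w.1 (by simp [Finset.mem_of_mem_erase hw'])
            exact this
          · rintro ⟨hzS, hz⟩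
            intro y hy
            by_cases hyx : y = x
            · subst hyx; exact hzS
            · have hy' : y ∈ K.erase x := Finset.mem_erase.mpr ⟨hyx, by simpa using hy⟩
              have : G1.Adj ⟨y, hsub y hy'⟩ ⟨z, hzS⟩ :=
                hz ⟨y, hsub y hy'⟩ (by simp [hmemK'' ⟨y, hsub y hy'⟩, hy'])
              exact this
        let e : G1.induce (dualSet G1 (K'' : Set ↥S)) ≃g
            G.induce (dualSet G (K : Set V)) := by
          refine ⟨⟨fun z => ⟨z.1.1, (hdualmem z.1.1).2 ⟨z.1.2, z.2⟩⟩,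
            fun z => ⟨⟨z.1, ((hdualmem z.1).1 z.2).choose⟩,
              ((hdualmem z.1).1 z.2).choose_spec⟩, ?_, ?_⟩, ?_⟩
          · intro z
            exact Subtype.ext (Subtype.ext rfl)
          · intro z
            exact Subtype.ext rfl
          · intro a b
            constructor
            · intro h; exact h
            · intro h; exact h
        have heq : ((d - 1 : ℕ) : ℤ) - (n : ℤ) = (d : ℤ) - ((n + 1 : ℕ) : ℤ) := by
          push_cast [hd1]; ring
        rw [← heq]
        exact isSphere_iso hIH e

/-- In a graph all of whose unit spheres are `(d-1)`-spheres (a geometric graph of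
dimension `d` without boundary), the dual graph of any complete subgraph on `k` vertices,
`1 ≤ k ≤ d+1`, is a `(d-k)`-sphere. -/
theorem dual_of_clique_isSphere {V : Type} [Fintype V] (d : ℕ) (G : SimpleGraph V)
    (hG : ∀ x : V, IsSphere ((d : ℤ) - 1) (G.induce (G.neighborSet x)))
    (K : Finset V) (hK : G.IsClique (K : Set V)) (k : ℕ)
    (hk1 : 1 ≤ k) (hk2 : k ≤ d + 1) (hcard : K.card = k) :
    IsSphere ((d : ℤ) - k) (G.induce (dualSet G (K : Set V))) := by
  exact dual_aux k d G hG K hK hk1 hk2 hcard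
end

section
/- Let G be a d-sphere with d >= 2 and let H be obtained from G by an edge subdivision at an edge e = (a,b). Then H is again a d-sphere, H is homotopic to G, and G can be recovered from H by an edge collapse. -/
universe u

open SimpleGraph

/-- Edge subdivision at the edge `(a, b)`: delete the edge, add a new vertex (`none`)
joined to `a`, to `b`, and to every common neighbor of `a` and `b`. -/
def edgeSubdivision {V : Type u} (G : SimpleGraph V) (a b : V) : SimpleGraph (Option V) where
  Adj u v :=
    match u, v with
    | some x, some y => G.Adj x y ∧ ¬((x = a ∧ y = b) ∨ (x = b ∧ y = a))
    | some x, none => x = a ∨ x = b ∨ (G.Adj a x ∧ G.Adj b x)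
    | none, some y => y = a ∨ y = b ∨ (G.Adj a y ∧ G.Adj b y)
    | none, none => False
  symm := by
    constructor
    rintro (_ | x) (_ | y) h
    · exact h
    · exact h
    · exact h
    · exact ⟨h.1.symm, fun hc => h.2 (hc.elim (fun hh => Or.inr ⟨hh.2, hh.1⟩)
        (fun hh => Or.inl ⟨hh.2, hh.1⟩))⟩
  loopless := by
    constructor
    rintro (_ | x) h
    · exact h
    · exact G.loopless.irrefl x h.1

/-- Edge collapse at `(a, b)`: identify `a` and `b` to a single vertex (kept as `a`),
adjacent to every former neighbor of `a` or of `b`. -/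
def edgeCollapse {V : Type u} (G : SimpleGraph V) (a b : V) :
    SimpleGraph {v : V // v ≠ b} where
  Adj u v := u ≠ v ∧ (G.Adj u.1 v.1 ∨ (u.1 = a ∧ G.Adj b v.1) ∨ (v.1 = a ∧ G.Adj b u.1))
  symm := by
    constructor
    rintro u v ⟨h1, h2⟩
    exact ⟨h1.symm, h2.elim (fun h => Or.inl h.symm)
      (fun h => h.elim (fun h => Or.inr (Or.inr h)) (fun h => Or.inr (Or.inl h)))⟩
  loopless := by constructor; rintro u ⟨h, _⟩; exact h rfl

/-- Adding a cone vertex (`none`) joined to all vertices of the set `A`. -/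
def addCone {V : Type u} (G : SimpleGraph V) (A : Set V) : SimpleGraph (Option V) where
  Adj u v :=
    match u, v with
    | some x, some y => G.Adj x y
    | some x, none => x ∈ A
    | none, some y => y ∈ A
    | none, none => False
  symm := by
    constructor
    rintro (_ | x) (_ | y) h
    · exact h
    · exact h
    · exact h
    · exact h.symm
  loopless := by
    constructor
    rintro (_ | x) h
    · exact h
    · exact G.loopless.irrefl x h

/-- Two graphs are homotopic if one can be obtained from the other, up to isomorphism,
by a finite sequence of steps each of which adds a new vertex joined to all vertices of a
contractible subgraph, or removes such a vertex (i.e. a vertex whose unit sphere is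
contractible). -/
inductive Homotopic : ∀ {V : Type u}, SimpleGraph V → ∀ {W : Type u}, SimpleGraph W → Prop
  | of_iso {V W : Type u} (G : SimpleGraph V) (H : SimpleGraph W)
      (h : Nonempty (G ≃g H)) : Homotopic G H
  | expand {V : Type u} (G : SimpleGraph V) (A : Set V)
      (h : GraphContractible (G.induce A)) : Homotopic G (addCone G A)
  | symm {V W : Type u} (G : SimpleGraph V) (H : SimpleGraph W) :
      Homotopic G H → Homotopic H G
  | trans {U V W : Type u} (F : SimpleGraph U) (G : SimpleGraph V) (H : SimpleGraph W) :
      Homotopic F G → Homotopic G H → Homotopic F H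

/-!
Subdivision commutes with taking unit spheres. The unit sphere of an old vertex `x` is unchanged
(with the new vertex in the place of `b` when `x = a`), unless `x` is a common neighbour of `a` and
`b`, in which case it is the subdivision of the old unit sphere at the same edge; the unit sphere of
the new vertex is the suspension of `S(a) ∩ S(b)`, the unit sphere of `b` inside `S(a)`, which is a
`(d - 2)`-sphere. Deleting an old vertex other than `a`, `b` commutes with subdivision as well,
while after deleting `a` the new vertex has `b` as a cone point in its unit sphere. Induction along
the definitions of contractibility and of spheres then shows that subdivision preserves both.

For the homotopy, coning off in the subdivision the new vertex together with the closed
neighbourhood of `b` in `G` gives the same graph as coning off in `G` first the unit sphere of the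
new vertex, `{a, b} ∪ (S(a) ∩ S(b))`, and then the closed neighbourhood of `b` minus `a`; all three
coned-off graphs are contractible.
-/

namespace SimpleGraph

variable {V W : Type u} {G : SimpleGraph V} {H : SimpleGraph W}

noncomputable def induceIsoOfBijOn {s : Set V} {t : Set W} {f : V → W} (hf : Set.BijOn f s t)
    (hadj : ∀ u ∈ s, ∀ v ∈ s, H.Adj (f u) (f v) ↔ G.Adj u v) : G.induce s ≃g H.induce t where
  toEquiv := hf.equiv f
  map_rel_iff' {u v} := hadj u u.2 v v.2

lemma Iso.bijOn_neighborSet (e : G ≃g H) (x : V) :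
    Set.BijOn e (G.neighborSet x) (H.neighborSet (e x)) := by
  refine ⟨fun v hv => e.map_adj_iff.2 hv, e.injective.injOn, fun w hw => ⟨e.symm w, ?_, by simp⟩⟩
  simpa [mem_neighborSet] using e.symm.map_adj_iff.2 hw

lemma Iso.bijOn_ne (e : G ≃g H) (x : V) : Set.BijOn e {y | y ≠ x} {y | y ≠ e x} :=
  ⟨fun _ hv => e.injective.ne hv, e.injective.injOn,
    fun w hw => ⟨e.symm w, fun h => hw (by simp [← h]), by simp⟩⟩

end SimpleGraph

lemma Set.bijOn_subtype_val {V : Type u} {s : Set V} {t : Set s} {u : Set V}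
    (htu : ∀ v (hv : v ∈ s), ⟨v, hv⟩ ∈ t ↔ v ∈ u) (hu : u ⊆ s) : Set.BijOn Subtype.val t u :=
  ⟨fun v hv => (htu v v.2).1 hv, Subtype.val_injective.injOn,
    fun v hv => ⟨⟨v, hu hv⟩, (htu v (hu hv)).2 hv, rfl⟩⟩

lemma finite_of_finite_ne {V : Type u} (x : V) [Finite {y : V | y ≠ x}] : Finite V :=
  Set.finite_univ_iff.1 (((Set.toFinite {y | y ≠ x}).insert x).subset
    fun y _ => by by_cases hy : y = x <;> simp [hy])

open SimpleGraph

section Contractible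

variable {V W : Type u}

theorem GraphContractible.finite {G : SimpleGraph V} (h : GraphContractible G) : Finite V := by
  induction h with
  | point _ _ _ => exact Finite.of_subsingleton
  | step _ x _ _ _ ihD => exact finite_of_finite_ne x

theorem IsSphere.finite {d : ℤ} {G : SimpleGraph V} (h : IsSphere d G) : Finite V := by
  cases h with
  | empty _ h => exact Finite.of_subsingleton
  | step _ _ _ _ hx =>
    obtain ⟨x, hx⟩ := hx
    have := hx.finite
    exact finite_of_finite_ne x

theorem GraphContractible.of_iso {G : SimpleGraph V} (h : GraphContractible G)
    {H : SimpleGraph W} (e : G ≃g H) : GraphContractible H := by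
  induction h generalizing W with
  | point G hne hsub => exact .point H (hne.map e) (e.symm.injective.subsingleton)
  | step G x _ _ ihS ihD =>
    exact .step H (e x) (ihS (e.induce (e.bijOn_neighborSet x))) (ihD (e.induce (e.bijOn_ne x)))

theorem IsSphere.of_iso {d : ℤ} {G : SimpleGraph V} (h : IsSphere d G) {H : SimpleGraph W}
    (e : G ≃g H) : IsSphere d H := by
  induction h generalizing W with
  | empty G h => exact .empty H e.symm.toEquiv.isEmpty
  | step hd G hne _ hx ih =>
    obtain ⟨x, hx⟩ := hx
    refine .step hd H (hne.map e) (fun w => ?_) ⟨e x, hx.of_iso (e.induce (e.bijOn_ne x))⟩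
    have := ih (e.symm w) (e.induce (e.bijOn_neighborSet (e.symm w)))
    rwa [e.apply_symm_apply] at this

theorem IsSphere.unitSphere {d : ℤ} {G : SimpleGraph V} (h : IsSphere d G) (x : V) :
    IsSphere (d - 1) (G.induce (G.neighborSet x)) := by
  cases h with
  | empty _ h => exact h.elim x
  | step _ _ _ hS _ => exact hS x

theorem graphContractible_of_forall_adj [Finite V] {G : SimpleGraph V} (v : V)
    (hv : ∀ w, w ≠ v → G.Adj v w) : GraphContractible G := by
  induction V using Finite.induction_subsingleton_or_nontrivial with
  | hbase V => exact .point G ⟨v⟩ inferInstance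
  | hstep V ih =>
    obtain ⟨w, hwv⟩ := exists_ne v
    refine .step G w
      (ih _ (Finite.card_subtype_lt (G.irrefl (v := w))) ⟨v, (hv w hwv).symm⟩ ?_)
      (ih _ (Finite.card_subtype_lt (not_not.2 rfl)) ⟨v, hwv.symm⟩ ?_)
    all_goals exact fun u hu => hv u (fun h => hu (Subtype.ext h))

theorem graphContractible_induce_of_forall_adj [Finite V] {G : SimpleGraph V} {s : Set V}
    {v : V} (hv : v ∈ s) (hadj : ∀ w ∈ s, w ≠ v → G.Adj v w) : GraphContractible (G.induce s) :=
  graphContractible_of_forall_adj ⟨v, hv⟩ fun w hw => hadj w w.2 fun h => hw (Subtype.ext h)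

theorem GraphContractible.induce_of_mem {G : SimpleGraph V} {s : Set V} {x : V} (hx : x ∈ s)
    (hS : GraphContractible (G.induce (s ∩ G.neighborSet x)))
    (hD : GraphContractible (G.induce (s \ {x}))) : GraphContractible (G.induce s) := by
  refine .step _ ⟨x, hx⟩
    (hS.of_iso (induceIsoOfBijOn (G := G.induce s) (H := G) ?_ fun _ _ _ _ => Iff.rfl).symm)
    (hD.of_iso (induceIsoOfBijOn (G := G.induce s) (H := G) ?_ fun _ _ _ _ => Iff.rfl).symm)
  · exact Set.bijOn_subtype_val (fun v hv => by simp [hv]) Set.inter_subset_left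
  · exact Set.bijOn_subtype_val (fun v hv => by simp [hv, Subtype.ext_iff]) Set.sdiff_subset

end Contractible

section Suspension

variable {W : Type u}

/-- The suspension of `J`, with poles `none` and `some none`. -/
def susp (J : SimpleGraph W) : SimpleGraph (Option (Option W)) where
  Adj u v :=
    match u, v with
    | some (some x), some (some y) => J.Adj x y
    | some (some _), _ => True
    | _, some (some _) => True
    | _, _ => False
  symm := ⟨by rintro (_ | _ | x) (_ | _ | y) h <;> first | trivial | exact h.symm⟩
  loopless := ⟨by rintro (_ | _ | x) h <;> first | exact h | exact J.loopless.irrefl x h⟩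

variable {k : ℤ} {J : SimpleGraph W}

theorem IsSphere.susp_unitSphere_apex (hJ : IsSphere k J) {p : Option (Option W)}
    (hp : ∀ x, p ≠ some (some x)) : IsSphere k ((susp J).induce ((susp J).neighborSet p)) := by
  refine hJ.of_iso ((induceUnivIso J).symm.trans (induceIsoOfBijOn (f := fun x => some (some x))
    ⟨fun x _ => ?_, (Option.some_injective _).comp (Option.some_injective _) |>.injOn, ?_⟩
    fun _ _ _ _ => Iff.rfl))
  · rcases p with _ | _ | y
    · trivial
    · trivial
    · exact absurd rfl (hp y)
  · rintro (_ | _ | x) hx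
    · rcases p with _ | _ | y <;> simp [susp] at hx ⊢; exact hp y rfl
    · rcases p with _ | _ | y <;> simp [susp] at hx ⊢; exact hp y rfl
    · exact ⟨x, trivial, rfl⟩

theorem IsSphere.susp_unitSphere_base (w : W)
    (h : IsSphere k (susp (J.induce (J.neighborSet w)))) :
    IsSphere k ((susp J).induce ((susp J).neighborSet (some (some w)))) := by
  refine h.of_iso ((induceUnivIso _).symm.trans (induceIsoOfBijOn
    (f := Option.map (Option.map Subtype.val))
    ⟨?_, (Option.map_injective (Option.map_injective Subtype.val_injective)).injOn, ?_⟩ ?_))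
  · rintro (_ | _ | ⟨x, hx⟩) _ <;> trivial
  · rintro (_ | _ | x) hx
    · exact ⟨none, trivial, rfl⟩
    · exact ⟨some none, trivial, rfl⟩
    · exact ⟨some (some ⟨x, hx⟩), trivial, rfl⟩
  · rintro (_ | _ | x) - (_ | _ | y) - <;> simp [susp]

theorem graphContractible_susp_delete_apex [Finite W] :
    GraphContractible ((susp J).induce {y | y ≠ none}) :=
  graphContractible_induce_of_forall_adj (v := some none) (Option.some_ne_none _) <| by
    rintro (_ | _ | x) hx hne <;> simp_all [susp]

theorem IsSphere.susp_of_unitSphere (hk : 0 ≤ k + 1) (hJ : IsSphere k J)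
    (hbase : ∀ w, IsSphere k (susp (J.induce (J.neighborSet w)))) :
    IsSphere (k + 1) (susp J) := by
  have := hJ.finite
  refine .step hk _ ⟨none⟩ (fun p => ?_) ⟨none, graphContractible_susp_delete_apex⟩
  rw [add_sub_cancel_right]
  rcases p with _ | _ | w
  · exact hJ.susp_unitSphere_apex (by simp)
  · exact hJ.susp_unitSphere_apex (by simp)
  · exact IsSphere.susp_unitSphere_base w (hbase w)

theorem IsSphere.susp (hJ : IsSphere k J) : IsSphere (k + 1) (susp J) := by
  induction hJ with
  | empty J hJ => exact .susp_of_unitSphere le_rfl (.empty J hJ) fun w => hJ.elim w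
  | step hd J hne hS hx ih =>
    exact .susp_of_unitSphere (by omega) (.step hd J hne hS hx) fun w => by
      simpa using ih w

end Suspension

section EdgeSubdivision

variable {V : Type u} {G : SimpleGraph V} {a b : V}

theorem edgeSubdivision_comm (G : SimpleGraph V) (a b : V) :
    edgeSubdivision G a b = edgeSubdivision G b a := by
  ext (_ | x) (_ | y) <;> simp [edgeSubdivision] <;> tauto

noncomputable def edgeSubdivisionInduceIso {s : Set V} (ha : a ∈ s) (hb : b ∈ s)
    {t : Set (Option V)} (ht : none ∈ t) (hts : ∀ v, some v ∈ t ↔ v ∈ s) :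
    edgeSubdivision (G.induce s) ⟨a, ha⟩ ⟨b, hb⟩ ≃g (edgeSubdivision G a b).induce t :=
  (induceUnivIso _).symm.trans <| induceIsoOfBijOn (f := Option.map Subtype.val)
    ⟨by rintro (_ | ⟨v, hv⟩) - <;> simp [*],
      (Option.map_injective Subtype.val_injective).injOn,
      by rintro (_ | v) hv; exacts [⟨none, trivial, rfl⟩, ⟨some ⟨v, (hts v).1 hv⟩, trivial, rfl⟩]⟩
    (by rintro (_ | ⟨u, hu⟩) - (_ | ⟨v, hv⟩) - <;> simp [edgeSubdivision])

/-- For `x = a`, the new vertex takes the place of `b`. -/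
noncomputable def edgeSubdivisionUnitSphereIso (hab : G.Adj a b) {x : V} (hxb : x ≠ b)
    (hx : ¬(G.Adj a x ∧ G.Adj b x)) :
    (edgeSubdivision G a b).induce ((edgeSubdivision G a b).neighborSet (some x)) ≃g
      G.induce (G.neighborSet x) := by
  refine induceIsoOfBijOn (f := fun y => y.getD b) ⟨?_, ?_, ?_⟩ ?_
  · rintro (_ | c) hc <;> simp [edgeSubdivision] at hc ⊢ <;> grind [G.adj_symm, G.irrefl]
  · rintro (_ | c) hc (_ | c') hc' h <;> simp [edgeSubdivision] at hc hc' h ⊢ <;>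
      grind [G.adj_symm, G.irrefl]
  · intro c hc
    by_cases hcb : x = a ∧ c = b
    · exact ⟨none, by simp [edgeSubdivision, hcb], by simp [hcb]⟩
    · exact ⟨some c, by simp [edgeSubdivision] at hc ⊢; grind, rfl⟩
  · rintro (_ | c) hc (_ | c') hc' <;> simp [edgeSubdivision] at hc hc' ⊢ <;>
      grind [G.adj_symm, G.irrefl]

theorem edgeSubdivision_unitSphere_iso_or (hab : G.Adj a b) (x : V) :
    Nonempty ((edgeSubdivision G a b).induce ((edgeSubdivision G a b).neighborSet (some x)) ≃g
      G.induce (G.neighborSet x)) ∨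
    ∃ (hax : G.Adj x a) (hbx : G.Adj x b),
      Nonempty ((edgeSubdivision G a b).induce ((edgeSubdivision G a b).neighborSet (some x)) ≃g
        edgeSubdivision (G.induce (G.neighborSet x)) ⟨a, hax⟩ ⟨b, hbx⟩) := by
  by_cases hx : G.Adj a x ∧ G.Adj b x
  · refine Or.inr ⟨hx.1.symm, hx.2.symm, ⟨(edgeSubdivisionInduceIso _ _ ?_ fun v => ?_).symm⟩⟩
    all_goals simp [edgeSubdivision, hx, hx.1.ne', hx.2.ne']
  by_cases hxb : x = b
  · subst hxb
    rw [edgeSubdivision_comm]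
    exact Or.inl ⟨edgeSubdivisionUnitSphereIso hab.symm hab.ne' (by tauto)⟩
  · exact Or.inl ⟨edgeSubdivisionUnitSphereIso hab hxb hx⟩

/-- The poles of the suspension are sent to `a` and `b`. -/
noncomputable def edgeSubdivisionUnitSphereNoneIso (hab : G.Adj a b) :
    susp ((G.induce (G.neighborSet a)).induce
        ((G.induce (G.neighborSet a)).neighborSet ⟨b, hab⟩)) ≃g
      (edgeSubdivision G a b).induce ((edgeSubdivision G a b).neighborSet none) := by
  have hA (v : (G.induce (G.neighborSet a)).neighborSet ⟨b, hab⟩) : G.Adj a v.1.1 := v.1.2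
  have hB (v : (G.induce (G.neighborSet a)).neighborSet ⟨b, hab⟩) : G.Adj b v.1.1 := v.2
  have ha (v : (G.induce (G.neighborSet a)).neighborSet ⟨b, hab⟩) : v.1.1 ≠ a := (hA v).ne'
  have hb (v : (G.induce (G.neighborSet a)).neighborSet ⟨b, hab⟩) : v.1.1 ≠ b := (hB v).ne'
  refine (induceUnivIso _).symm.trans (induceIsoOfBijOn
    (f := fun o => some (o.elim a fun o' => o'.elim b fun v => v.1.1)) ⟨?_, ?_, ?_⟩ ?_)
  · rintro (_ | _ | v) - <;> simp [edgeSubdivision, hA, hB]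
  · rintro (_ | _ | v) - (_ | _ | w) - h <;>
      simp [ha, hb, hab.ne, eq_comm (a := a), eq_comm (a := b), Subtype.ext_iff] at h ⊢
    exact h
  · rintro (_ | c) hc
    · simp [edgeSubdivision] at hc
    · obtain rfl | rfl | ⟨hac, hbc⟩ : c = a ∨ c = b ∨ (G.Adj a c ∧ G.Adj b c) := hc
      · exact ⟨none, trivial, rfl⟩
      · exact ⟨some none, trivial, rfl⟩
      · exact ⟨some (some ⟨⟨c, hac⟩, hbc⟩), trivial, rfl⟩
  · rintro (_ | _ | v) - (_ | _ | w) - <;>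
      simp [edgeSubdivision, susp] <;> grind [G.adj_symm]

theorem GraphContractible.edgeSubdivision_delete_left (hab : G.Adj a b)
    (hD : GraphContractible (G.induce {y | y ≠ a})) :
    GraphContractible ((edgeSubdivision G a b).induce {y | y ≠ some a}) := by
  have := hD.finite
  have := finite_of_finite_ne a
  refine .induce_of_mem (x := none) (by simp) ?_ (hD.of_iso (induceIsoOfBijOn (f := some) ?_ ?_))
  · refine graphContractible_induce_of_forall_adj (v := some b)
      (by simp [edgeSubdivision, hab.ne']) ?_
    rintro (_ | c) hc hcb <;> simp [edgeSubdivision] at hc hcb ⊢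
    grind [G.adj_symm]
  · refine ⟨fun c hc => by simpa using hc, (Option.some_injective _).injOn, ?_⟩
    rintro (_ | c) ⟨hc, hcn⟩
    exacts [absurd rfl hcn, ⟨c, by simpa using hc, rfl⟩]
  · intro u hu v hv
    simp_all [edgeSubdivision]

theorem GraphContractible.edgeSubdivision_delete_endpoint {x : V} (hab : G.Adj a b)
    (hx : x = a ∨ x = b) (hD : GraphContractible (G.induce {y | y ≠ x})) :
    GraphContractible ((edgeSubdivision G a b).induce {y | y ≠ some x}) := by
  rcases hx with rfl | rfl
  · exact hD.edgeSubdivision_delete_left hab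
  · rw [edgeSubdivision_comm]
    exact hD.edgeSubdivision_delete_left hab.symm

theorem graphContractible_edgeSubdivision (hG : GraphContractible G) (hab : G.Adj a b) :
    GraphContractible (edgeSubdivision G a b) := by
  induction hG with
  | point G _ _ => exact absurd (Subsingleton.elim a b) hab.ne
  | step G x hS hD ihS ihD =>
    refine .step _ (some x) ?_ ?_
    · rcases edgeSubdivision_unitSphere_iso_or hab x with ⟨⟨e⟩⟩ | ⟨hax, hbx, ⟨e⟩⟩
      · exact hS.of_iso e.symm
      · exact (ihS (show (G.induce _).Adj ⟨a, hax⟩ ⟨b, hbx⟩ from hab)).of_iso e.symm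
    · by_cases hx : x = a ∨ x = b
      · exact hD.edgeSubdivision_delete_endpoint hab hx
      · push Not at hx
        have hab' : (G.induce {y | y ≠ x}).Adj ⟨a, hx.1.symm⟩ ⟨b, hx.2.symm⟩ := hab
        exact (ihD hab').of_iso (edgeSubdivisionInduceIso _ _ (by simp) (by simp))

theorem GraphContractible.edgeSubdivision_delete {x : V} (hab : G.Adj a b)
    (hD : GraphContractible (G.induce {y | y ≠ x})) :
    GraphContractible ((edgeSubdivision G a b).induce {y | y ≠ some x}) := by
  by_cases hx : x = a ∨ x = b
  · exact hD.edgeSubdivision_delete_endpoint hab hx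
  · push Not at hx
    have hab' : (G.induce {y | y ≠ x}).Adj ⟨a, hx.1.symm⟩ ⟨b, hx.2.symm⟩ := hab
    exact (graphContractible_edgeSubdivision hD hab').of_iso
      (edgeSubdivisionInduceIso _ _ (by simp) (by simp))

theorem isSphere_edgeSubdivision {d : ℤ} (hG : IsSphere d G) (hab : G.Adj a b) :
    IsSphere d (edgeSubdivision G a b) := by
  induction hG with
  | empty G h => exact h.elim a
  | step hd G hne hS hx ih =>
    obtain ⟨x, hx⟩ := hx
    refine .step hd _ ⟨none⟩ (fun y => ?_) ⟨some x, hx.edgeSubdivision_delete hab⟩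
    rcases y with _ | y
    · have hsusp := ((hS a).unitSphere ⟨b, hab⟩).susp
      rw [sub_add_cancel] at hsusp
      exact hsusp.of_iso (edgeSubdivisionUnitSphereNoneIso hab)
    · rcases edgeSubdivision_unitSphere_iso_or hab y with ⟨⟨e⟩⟩ | ⟨hay, hby, ⟨e⟩⟩
      · exact (hS y).of_iso e.symm
      · exact (ih y (show (G.induce _).Adj ⟨a, hay⟩ ⟨b, hby⟩ from hab)).of_iso e.symm

open Classical in
/-- The swap matches the cone point on the left with `b` on the right, and `b` on the left with
the outer cone point on the right. -/
noncomputable def addConeEdgeSubdivisionIso (hab : G.Adj a b) :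
    addCone (edgeSubdivision G a b) {y | y.elim True fun c => c = b ∨ G.Adj b c} ≃g
      addCone (addCone G {v | v = a ∨ v = b ∨ G.Adj a v ∧ G.Adj b v})
        {y | y.elim True fun c => c = b ∨ G.Adj b c ∧ c ≠ a} where
  toEquiv := Equiv.swap none (some (some b))
  map_rel_iff' {u v} := by
    have shape (w : Option (Option V)) :
        w = none ∨ w = some none ∨ w = some (some b) ∨ ∃ c, c ≠ b ∧ w = some (some c) := by
      rcases w with _ | _ | c
      · exact .inl rfl
      · exact .inr (.inl rfl)
      · obtain rfl | hc := eq_or_ne c b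
        exacts [.inr (.inr (.inl rfl)), .inr (.inr (.inr ⟨c, hc, rfl⟩))]
    rcases shape u with rfl | rfl | rfl | ⟨c, hc, rfl⟩ <;>
      rcases shape v with rfl | rfl | rfl | ⟨c', hc', rfl⟩ <;>
      simp [addCone, edgeSubdivision, Equiv.swap_apply_of_ne_of_ne, *] <;> grind [G.adj_symm]

theorem homotopic_edgeSubdivision [Finite V] (hab : G.Adj a b) :
    Homotopic (edgeSubdivision G a b) G := by
  have hA : GraphContractible (G.induce {v | v = a ∨ v = b ∨ G.Adj a v ∧ G.Adj b v}) := by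
    refine graphContractible_induce_of_forall_adj (v := a) (by simp) ?_
    rintro w (rfl | rfl | ⟨haw, -⟩) hw
    exacts [absurd rfl hw, hab, haw]
  have hB : GraphContractible ((addCone G {v | v = a ∨ v = b ∨ G.Adj a v ∧ G.Adj b v}).induce
      {y | y.elim True fun c => c = b ∨ G.Adj b c ∧ c ≠ a}) := by
    refine graphContractible_induce_of_forall_adj (v := some b) (by simp) ?_
    rintro (_ | c) hc hcb <;> simp_all [addCone]
  have hC : GraphContractible ((edgeSubdivision G a b).induce
      {y | y.elim True fun c => c = b ∨ G.Adj b c}) := by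
    refine .induce_of_mem (x := some a) (by simp [hab.symm]) ?_ ?_
    · refine graphContractible_induce_of_forall_adj (v := none) (by simp [edgeSubdivision]) ?_
      rintro (_ | c) hc hcn <;> simp_all [edgeSubdivision]
      tauto
    · refine graphContractible_induce_of_forall_adj (v := some b) (by simp [hab.ne']) ?_
      rintro (_ | c) hc hcb <;> simp_all [edgeSubdivision]
  exact Homotopic.trans _ _ _ (Homotopic.trans _ _ _ (.expand _ _ hC)
    (.of_iso _ _ ⟨addConeEdgeSubdivisionIso hab⟩))
    (.symm _ _ (Homotopic.trans _ _ _ (.expand _ _ hA) (.expand _ _ hB)))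

def isoEdgeCollapseEdgeSubdivision (hab : G.Adj a b) :
    G ≃g edgeCollapse (edgeSubdivision G a b) (some a) none where
  toFun x := ⟨some x, Option.some_ne_none x⟩
  invFun p := p.1.get (Option.ne_none_iff_isSome.1 p.2)
  left_inv _ := rfl
  right_inv := by rintro ⟨_ | x, hx⟩; exacts [absurd rfl hx, rfl]
  map_rel_iff' := by
    simp [edgeCollapse, edgeSubdivision]
    grind [G.adj_symm, G.irrefl]

end EdgeSubdivision

theorem edgeSubdivision_isSphere_homotopic_collapse_general {V : Type}
    (d : ℕ) (G : SimpleGraph V) (hG : IsSphere (d : ℤ) G)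
    (a b : V) (hab : G.Adj a b) :
    IsSphere (d : ℤ) (edgeSubdivision G a b) ∧
      Homotopic (edgeSubdivision G a b) G ∧
      ∃ u w : Option V, (edgeSubdivision G a b).Adj u w ∧
        Nonempty ((edgeCollapse (edgeSubdivision G a b) u w) ≃g G) := by
  have := hG.finite
  exact ⟨isSphere_edgeSubdivision hG hab, homotopic_edgeSubdivision hab,
    some a, none, by simp [edgeSubdivision], ⟨(isoEdgeCollapseEdgeSubdivision hab).symm⟩⟩

/-- Edge subdivision of a `d`-sphere (`d ≥ 2`) yields again a `d`-sphere, homotopic to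
the original graph, and the original graph is recovered by an edge collapse. -/
theorem edgeSubdivision_isSphere_homotopic_collapse {V : Type} [Fintype V]
    (d : ℕ) (hd : 2 ≤ d) (G : SimpleGraph V) (hG : IsSphere (d : ℤ) G)
    (a b : V) (hab : G.Adj a b) :
    IsSphere (d : ℤ) (edgeSubdivision G a b) ∧
      Homotopic (edgeSubdivision G a b) G ∧
      ∃ u w : Option V, (edgeSubdivision G a b).Adj u w ∧
        Nonempty ((edgeCollapse (edgeSubdivision G a b) u w) ≃g G) :=
  edgeSubdivision_isSphere_homotopic_collapse_general d G hG a b hab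
end

section
/- Let G be a d-sphere with d >= 2, let e = (a,b) be an edge of G, and let H be obtained from G by an edge subdivision at e. Then for every complete subgraph x on d-1 vertices (a (d-2)-dimensional simplex) contained in the dual graph of e, the degree of x in H is one more than the degree of x in G. -/
universe u

open SimpleGraph

section EdgeSubdivision

variable {V : Type u} (G : SimpleGraph V) {a b : V} {A : Set V}

lemma edgeSubdivision_adj_some_some {x y : V} (hxa : x ≠ a) (hxb : x ≠ b) :
    (edgeSubdivision G a b).Adj (some x) (some y) ↔ G.Adj x y := by
  simp [edgeSubdivision, hxa, hxb]

lemma none_mem_dualSet_edgeSubdivision (hA : A ⊆ G.commonNeighbors a b) :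
    none ∈ dualSet (edgeSubdivision G a b) (Option.some '' A) := by
  rintro _ ⟨y, hy, rfl⟩
  exact Or.inr (Or.inr (hA hy))

lemma some_mem_dualSet_edgeSubdivision_iff (ha : a ∉ A) (hb : b ∉ A) {x : V} :
    some x ∈ dualSet (edgeSubdivision G a b) (Option.some '' A) ↔ x ∈ dualSet G A := by
  simp only [dualSet, Set.mem_ofPred_eq, Set.forall_mem_image]
  refine forall₂_congr fun y hy => ?_
  exact edgeSubdivision_adj_some_some G (ne_of_mem_of_not_mem hy ha) (ne_of_mem_of_not_mem hy hb)

lemma dualSet_edgeSubdivision_image_some (hA : A ⊆ G.commonNeighbors a b) :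
    dualSet (edgeSubdivision G a b) (Option.some '' A) = insert none (Option.some '' dualSet G A) := by
  ext (_ | x)
  · simpa using none_mem_dualSet_edgeSubdivision G hA
  · rw [some_mem_dualSet_edgeSubdivision_iff G (fun ha => G.notMem_commonNeighbors_left a b (hA ha))
      (fun hb => G.notMem_commonNeighbors_right a b (hA hb))]
    simp

lemma ncard_dualSet_edgeSubdivision_image_some [Finite V] (hA : A ⊆ G.commonNeighbors a b) :
    (dualSet (edgeSubdivision G a b) (Option.some '' A)).ncard = (dualSet G A).ncard + 1 := by
  rw [dualSet_edgeSubdivision_image_some G hA, Set.ncard_insert_of_notMem (by simp),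
    Set.ncard_image_of_injective _ (Option.some_injective V)]

end EdgeSubdivision

theorem edgeSubdivision_degree_succ_general {V : Type} [Fintype V]
    (G : SimpleGraph V)
    (a b : V)
    (K : Finset V)
    (hKe : ∀ y ∈ K, G.Adj a y ∧ G.Adj b y) :
    (dualSet (edgeSubdivision G a b) (Option.some '' (K : Set V))).ncard =
      (dualSet G (K : Set V)).ncard + 1 :=
  ncard_dualSet_edgeSubdivision_image_some G fun y hy => G.mem_commonNeighbors.mpr (hKe y hy)

/-- An edge subdivision at `e = (a,b)` increases by `1` the degree of every
`(d-2)`-dimensional simplex contained in the dual graph of `e` (i.e. every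
`(d-1)`-vertex complete subgraph all of whose vertices are adjacent to `a` and `b`). -/
theorem edgeSubdivision_degree_succ {V : Type} [Fintype V]
    (d : ℕ) (hd : 2 ≤ d) (G : SimpleGraph V) (hG : IsSphere (d : ℤ) G)
    (a b : V) (hab : G.Adj a b)
    (K : Finset V) (hK : G.IsClique (K : Set V)) (hcard : K.card = d - 1)
    (hKe : ∀ y ∈ K, G.Adj a y ∧ G.Adj b y) :
    (dualSet (edgeSubdivision G a b) (Option.some '' (K : Set V))).ncard =
      (dualSet G (K : Set V)).ncard + 1 :=
  edgeSubdivision_degree_succ_general G a b K hKe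
end
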